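/- arXiv:1512.06411 — 2 statements merged into one kernel-verified Lean document; each statement's English description precedes it below -/
import Mathlib

section
/- The formal power series ∑_{n≥0} binomial(n+3,3) q^n + ∑_{s≥1} (10·binomial(s,3) + 11·binomial(s,2) + s) q^{2s} + ∑_{s≥0} (10·binomial(s,3) + 16·binomial(s,2) + 6s) q^{2s+1} equals the rational function (1 + 4q + 7q² + 10q³ + 10q⁴ + 4q⁵)/(1-q²)⁴, i.e., the power series multiplied by (1-q²)⁴ equals the polynomial 1 + 4q + 7q² + 10q³ + 10q⁴ + 4q⁵. -/
/-!
Since `∑ₙ C(n, k) xⁿ = xᵏ / (1 - x)ᵏ⁺¹`, multiplying by `(1 - q²)⁴ = (1 - q)⁴ (1 + q)⁴` turns the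
first series into `(1 + q)⁴`. The even and odd parts are the series in `x = q²` (the odd one times
`q`) of `a C(s, 3) + b C(s, 2) + c s`, and `(1 - x)⁴` turns these into
`a x³ + b x² (1 - x) + c x (1 - x)²`, i.e. `q² + 9q⁴` and `6q³ + 4q⁵`.
-/

namespace PowerSeries

variable {R : Type*} [CommRing R]

theorem mk_choose_add_mul_one_sub_X_pow (k : ℕ) :
    mk (fun n => ((n + k).choose k : R)) * (1 - X) ^ (k + 1) = 1 := by
  simp_rw [add_comm _ k]
  exact (invOneSubPow R (k + 1)).val_inv

theorem mk_choose_eq_X_pow_mul (k : ℕ) :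
    mk (fun n => (n.choose k : R)) = X ^ k * mk (fun n => ((n + k).choose k : R)) := by
  ext n
  rw [coeff_mk, coeff_X_pow_mul', coeff_mk]
  split_ifs with h
  · rw [Nat.sub_add_cancel h]
  · rw [Nat.choose_eq_zero_of_lt (not_le.mp h), Nat.cast_zero]

theorem mk_choose_mul_one_sub_X_pow (k : ℕ) :
    mk (fun n => (n.choose k : R)) * (1 - X) ^ (k + 1) = X ^ k := by
  rw [mk_choose_eq_X_pow_mul, mul_assoc, mk_choose_add_mul_one_sub_X_pow, mul_one]

theorem mk_cubic_choose_mul_one_sub_X_pow_four (a b c : R) :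
    mk (fun n => a * n.choose 3 + b * n.choose 2 + c * n) * (1 - X) ^ 4
      = C a * X ^ 3 + C b * X ^ 2 * (1 - X) + C c * X * (1 - X) ^ 2 := by
  have hmk : mk (fun n => a * n.choose 3 + b * n.choose 2 + c * n)
      = C a * mk (fun n => (n.choose 3 : R)) + C b * mk (fun n => (n.choose 2 : R))
        + C c * mk (fun n => (n.choose 1 : R)) := by
    ext n
    simp
  have h3 := mk_choose_mul_one_sub_X_pow (R := R) 3
  have h2 := mk_choose_mul_one_sub_X_pow (R := R) 2
  have h1 := mk_choose_mul_one_sub_X_pow (R := R) 1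
  rw [hmk]
  linear_combination C a * h3 + C b * (1 - X) * h2 + C c * (1 - X) ^ 2 * h1

theorem mk_ite_mod_two_eq_zero (f : ℕ → R) :
    mk (fun d => if d % 2 = 0 then f (d / 2) else 0) = expand 2 two_ne_zero (mk f) := by
  ext d
  simp [coeff_expand, Nat.dvd_iff_mod_eq_zero]

theorem mk_ite_mod_two_eq_one (f : ℕ → R) :
    mk (fun d => if d % 2 = 1 then f (d / 2) else 0) = X * expand 2 two_ne_zero (mk f) := by
  ext d
  rcases d with _ | d
  · simp
  · rw [coeff_mk, coeff_succ_X_mul, coeff_expand, coeff_mk]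
    by_cases h : 2 ∣ d
    · rw [if_pos (by omega), if_pos h, show (d + 1) / 2 = d / 2 by omega]
    · rw [if_neg (by omega), if_neg h]

theorem expand_two_mk_cubic_choose_mul_one_sub_X_sq_pow_four (a b c : R) :
    expand 2 two_ne_zero (mk fun n => a * n.choose 3 + b * n.choose 2 + c * n) * (1 - X ^ 2) ^ 4
      = C a * X ^ 6 + C b * X ^ 4 * (1 - X ^ 2) + C c * X ^ 2 * (1 - X ^ 2) ^ 2 := by
  have h := congrArg (expand 2 two_ne_zero) (mk_cubic_choose_mul_one_sub_X_pow_four a b c)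
  simp only [map_add, map_mul, map_sub, map_pow, map_one, expand_C, expand_X] at h
  rw [h]
  ring

end PowerSeries

open PowerSeries

/-- The power series `∑_{n≥0} C(n+3,3) q^n + ∑_{s≥1} (10C(s,3)+11C(s,2)+s) q^{2s}
  + ∑_{s≥0} (10C(s,3)+16C(s,2)+6s) q^{2s+1}` times `(1-q²)⁴` equals
  `1 + 4q + 7q² + 10q³ + 10q⁴ + 4q⁵`. -/
theorem stmt_3 :
    (PowerSeries.mk (fun n => (Nat.choose (n + 3) 3 : ℤ))
      + PowerSeries.mk (fun d =>
          if d % 2 = 0 ∧ d ≠ 0 then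
            (10 * Nat.choose (d / 2) 3 + 11 * Nat.choose (d / 2) 2 + d / 2 : ℤ)
          else 0)
      + PowerSeries.mk (fun d =>
          if d % 2 = 1 then
            (10 * Nat.choose (d / 2) 3 + 16 * Nat.choose (d / 2) 2 + 6 * (d / 2) : ℤ)
          else 0))
      * (1 - (PowerSeries.X : PowerSeries ℤ) ^ 2) ^ 4
    = 1 + 4 * PowerSeries.X + 7 * PowerSeries.X ^ 2 + 10 * PowerSeries.X ^ 3
        + 10 * PowerSeries.X ^ 4 + 4 * PowerSeries.X ^ 5 := by
  have hA : mk (fun n => ((n + 3).choose 3 : ℤ)) * (1 - X ^ 2) ^ 4 = (1 + X) ^ 4 := by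
    linear_combination (1 + X) ^ 4 * mk_choose_add_mul_one_sub_X_pow (R := ℤ) 3
  have hE : mk (fun d => if d % 2 = 0 ∧ d ≠ 0 then
        (10 * Nat.choose (d / 2) 3 + 11 * Nat.choose (d / 2) 2 + d / 2 : ℤ) else 0)
      = expand 2 two_ne_zero (mk fun s => 10 * (s.choose 3 : ℤ) + 11 * s.choose 2 + 1 * s) := by
    rw [← mk_ite_mod_two_eq_zero]
    congr 1; funext d
    rcases eq_or_ne d 0 with rfl | hd
    · simp
    · simp [hd]
  have hO : mk (fun d => if d % 2 = 1 then
        (10 * Nat.choose (d / 2) 3 + 16 * Nat.choose (d / 2) 2 + 6 * (d / 2) : ℤ) else 0)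
      = X * expand 2 two_ne_zero (mk fun s => 10 * (s.choose 3 : ℤ) + 16 * s.choose 2 + 6 * s) := by
    rw [← mk_ite_mod_two_eq_one]
    simp
  rw [add_mul, add_mul, hA, hE, hO, mul_assoc, expand_two_mk_cubic_choose_mul_one_sub_X_sq_pow_four,
    expand_two_mk_cubic_choose_mul_one_sub_X_sq_pow_four]
  simp only [map_ofNat, map_one]
  ring
end

section
/- Let α be a positive irrational real number, β = α/(α+1), and c_d = ⌊dβ⌋ - ⌊(d-1)β⌋ for d ≥ 1. Then c_d ∈ {0,1} for all d ≥ 1, and the formal power series H(q) = 1/(1-q) + ∑_{d≥1} ⌊dβ⌋ q^d over ℚ is not a rational function: there exist no polynomials P, Q ∈ ℚ[q], Q ≠ 0, with Q·H = P in ℚ[[q]]. -/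
/-!
Multiplying `H` by `1 - q` gives the series of increments `⌊(d+1)β⌋ - ⌊dβ⌋`, which take
only the values `0` and `1`. If `H` were rational, so would be this series; beyond the degree
of the numerator its coefficients then satisfy a linear recurrence, and a recurrence over
finitely many values forces the coefficients to be eventually periodic. Periodic increments of
period `p` make `⌊(M + kp)β⌋ - ⌊Mβ⌋ = ks` for a fixed integer `s`, so `|k(pβ - s)| < 1` for
every `k`, whence `β = s/p` is rational, whereas `β = α/(α+1)` is irrational.
-/

open Polynomial Finset
open scoped PowerSeries

theorem Int.floor_add_sub_floor_eq_zero_or_one {R : Type*} [Ring R] [LinearOrder R]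
    [IsStrictOrderedRing R] [FloorRing R] (x : R) {b : R} (hb₀ : 0 ≤ b) (hb₁ : b ≤ 1) :
    ⌊x + b⌋ - ⌊x⌋ = 0 ∨ ⌊x + b⌋ - ⌊x⌋ = 1 := by
  have hlo : ⌊x⌋ ≤ ⌊x + b⌋ := Int.floor_le_floor (le_add_of_nonneg_right hb₀)
  have hhi : ⌊x + b⌋ ≤ ⌊x⌋ + 1 := by
    rw [← Int.floor_add_one]; exact Int.floor_le_floor (add_le_add_right hb₁ x)
  omega

theorem irrational_div_add_one {α : ℝ} (hα : Irrational α) : Irrational (α / (α + 1)) := by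
  have hα₀ : α ≠ 0 := hα.ne_zero
  have h : α / (α + 1) = ((1 : ℕ) + α⁻¹)⁻¹ := by
    push_cast; field_simp
  rw [h]
  exact (hα.inv.natCast_add 1).inv

theorem PowerSeries.coeff_polynomial_mul_eq_sum_Icc {R : Type*} [CommSemiring R] (Q : R[X])
    (φ : R⟦X⟧) {n : ℕ} (hn : Q.natDegree ≤ n) :
    coeff n ((Q : R⟦X⟧) * φ) =
      ∑ i ∈ Icc Q.natTrailingDegree Q.natDegree, Q.coeff i * coeff (n - i) φ := by
  rw [coeff_mul, Nat.sum_antidiagonal_eq_sum_range_succ fun i k => coeff i (Q : R⟦X⟧) * coeff k φ]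
  simp only [Polynomial.coeff_coe]
  refine (sum_subset (fun i hi => ?_) fun i _ hi => ?_).symm
  · simp only [mem_Icc, mem_range] at hi ⊢; omega
  · simp only [mem_Icc, not_and_or, not_le] at hi
    rcases hi with hi | hi
    · rw [coeff_eq_zero_of_lt_natTrailingDegree hi, zero_mul]
    · rw [coeff_eq_zero_of_natDegree_lt hi, zero_mul]

theorem PowerSeries.coeff_eq_of_window_eq_of_polynomial_mul_eq {R : Type*} [CommRing R]
    [NoZeroDivisors R] {φ : R⟦X⟧} {P Q : R[X]} (hQ : Q ≠ 0) (h : (Q : R⟦X⟧) * φ = P) :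
    ∃ L N : ℕ, ∀ m₁ m₂, N ≤ m₁ → N ≤ m₂ → (∀ j < L, coeff (m₁ + j) φ = coeff (m₂ + j) φ) →
      coeff (m₁ + L) φ = coeff (m₂ + L) φ := by
  set t := Q.natTrailingDegree
  set D := Q.natDegree
  have htD : t ≤ D := natTrailingDegree_le_natDegree Q
  -- beyond the degree of `P`, the coefficient `m + D` of `Q * φ` splits as
  -- `Q_t * φ_(m + D - t)` plus a combination of `φ_m, …, φ_(m + D - t - 1)`
  have hsplit : ∀ m, P.natDegree < m →
      Q.coeff t * coeff (m + (D - t)) φ +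
        ∑ i ∈ Ioc t D, Q.coeff i * coeff (m + (D - i)) φ = 0 := by
    intro m hm
    have h0 : coeff (m + D) ((Q : R⟦X⟧) * φ) = 0 := by
      rw [h, Polynomial.coeff_coe, coeff_eq_zero_of_natDegree_lt (by omega)]
    rw [coeff_polynomial_mul_eq_sum_Icc Q φ (by omega), ← add_sum_Ioc_eq_sum_Icc htD] at h0
    rw [← h0, Nat.add_sub_assoc htD]
    congr 1
    refine sum_congr rfl fun i hi => ?_
    rw [Nat.add_sub_assoc (mem_Icc.mp (Ioc_subset_Icc_self hi)).2]
  refine ⟨D - t, P.natDegree + 1, fun m₁ m₂ hm₁ hm₂ hwin => ?_⟩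
  have hsum : ∑ i ∈ Ioc t D, Q.coeff i * coeff (m₁ + (D - i)) φ =
      ∑ i ∈ Ioc t D, Q.coeff i * coeff (m₂ + (D - i)) φ :=
    sum_congr rfl fun i hi => by have := mem_Ioc.mp hi; rw [hwin (D - i) (by omega)]
  refine mul_left_cancel₀ (coeff_natTrailingDegree_ne_zero.mpr hQ) ?_
  have h₁ := hsplit m₁ (by omega)
  have h₂ := hsplit m₂ (by omega)
  rw [hsum] at h₁
  exact add_right_cancel (h₁.trans h₂.symm)

theorem exists_periodic_of_window_eq {α : Type*} {f : ℕ → α} (hf : (Set.range f).Finite)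
    {L N : ℕ} (hdet : ∀ m₁ m₂, N ≤ m₁ → N ≤ m₂ → (∀ j < L, f (m₁ + j) = f (m₂ + j)) →
      f (m₁ + L) = f (m₂ + L)) :
    ∃ M p, 0 < p ∧ ∀ j, f (M + p + j) = f (M + j) := by
  obtain ⟨a, b, hab, hwin⟩ := Set.Finite.exists_lt_map_eq_of_forall_mem
    (f := fun m (j : Fin L) => f (N + m + j)) (t := Set.univ.pi fun _ => Set.range f)
    (fun m j _ => Set.mem_range_self _) (Set.Finite.pi fun _ => hf)
  refine ⟨N + a, b - a, by omega, fun j => ?_⟩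
  induction j using Nat.strong_induction_on with
  | _ j ih =>
    rcases lt_or_ge j L with hj | hj
    · have := congrFun hwin ⟨j, hj⟩
      simp only at this
      rw [show N + a + (b - a) = N + b by omega, this]
    · obtain ⟨k, rfl⟩ := Nat.exists_eq_add_of_le' hj
      rw [← add_assoc, ← add_assoc]
      exact hdet _ _ (by omega) (by omega) fun i hi => by
        simpa only [add_assoc] using ih (k + i) (by omega)

theorem PowerSeries.exists_periodic_coeff_of_polynomial_mul_eq {R : Type*} [CommRing R]
    [NoZeroDivisors R] {φ : R⟦X⟧} {P Q : R[X]} (hQ : Q ≠ 0) (h : (Q : R⟦X⟧) * φ = P)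
    (hφ : (Set.range fun n => coeff n φ).Finite) :
    ∃ M p, 0 < p ∧ ∀ j, coeff (M + p + j) φ = coeff (M + j) φ := by
  obtain ⟨L, N, hdet⟩ := coeff_eq_of_window_eq_of_polynomial_mul_eq hQ h
  exact exists_periodic_of_window_eq hφ hdet

theorem eq_add_nsmul_of_periodic_sub {G : Type*} [AddCommGroup G] {g : ℕ → G} {M p : ℕ}
    (h : ∀ j, g (M + p + j + 1) - g (M + p + j) = g (M + j + 1) - g (M + j)) (k : ℕ) :
    g (M + k * p) = g M + k • (g (M + p) - g M) := by
  have hshift : ∀ j, g (M + p + j) - g (M + j) = g (M + p) - g M := by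
    intro j
    induction j with
    | zero => rfl
    | succ j ih => rw [← ih, ← add_assoc, ← add_assoc, ← sub_eq_sub_iff_sub_eq_sub, h]
  induction k with
  | zero => simp
  | succ k ih =>
    rw [succ_nsmul, ← add_assoc, ← ih, ← hshift (k * p), add_sub_cancel, add_mul, one_mul,
      add_comm (k * p), add_assoc]

theorem not_irrational_of_floor_mul_sub_periodic {β : ℝ} {M p : ℕ} (hp : 0 < p)
    (h : ∀ j, ⌊((M + p + j + 1 : ℕ) : ℝ) * β⌋ - ⌊((M + p + j : ℕ) : ℝ) * β⌋ =
      ⌊((M + j + 1 : ℕ) : ℝ) * β⌋ - ⌊((M + j : ℕ) : ℝ) * β⌋) :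
    ¬ Irrational β := by
  set s := ⌊((M + p : ℕ) : ℝ) * β⌋ - ⌊(M : ℝ) * β⌋
  have hsmall : ∀ k : ℕ, (k : ℝ) * |p * β - s| < 1 := by
    intro k
    have hk : ⌊((M + k * p : ℕ) : ℝ) * β⌋ = ⌊(M : ℝ) * β⌋ + k * s := by
      rw [← nsmul_eq_mul k s]
      exact eq_add_nsmul_of_periodic_sub (g := fun n : ℕ => ⌊(n : ℝ) * β⌋) h k
    have h₁ := Int.floor_le (((M + k * p : ℕ) : ℝ) * β)
    have h₂ := Int.lt_floor_add_one (((M + k * p : ℕ) : ℝ) * β)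
    have h₃ := Int.floor_le ((M : ℝ) * β)
    have h₄ := Int.lt_floor_add_one ((M : ℝ) * β)
    rw [hk, Int.cast_add, Int.cast_mul, Int.cast_natCast, Nat.cast_add, Nat.cast_mul] at h₁ h₂
    rw [← Nat.abs_cast, ← abs_mul, abs_lt]
    constructor <;> nlinarith
  have hps : (p : ℝ) * β = s := by
    by_contra hne
    have hpos : 0 < |p * β - s| := abs_pos.mpr (sub_ne_zero.mpr hne)
    obtain ⟨k, hk⟩ := exists_nat_gt |p * β - s|⁻¹
    have := hsmall k
    rw [inv_lt_iff_one_lt_mul₀ hpos] at hk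
    linarith
  exact fun hβ => hβ ⟨s / p, by push_cast; rw [← hps]; field_simp⟩

theorem not_exists_polynomial_mul_mk_one_add_floor_mul_eq {β : ℝ} (hβ₀ : 0 ≤ β)
    (hβ₁ : β ≤ 1) (hβ : Irrational β) :
    ¬ ∃ P Q : ℚ[X], Q ≠ 0 ∧
      (Q : ℚ⟦X⟧) * PowerSeries.mk (fun d => (1 : ℚ) + (⌊(d : ℝ) * β⌋ : ℤ)) = P := by
  rintro ⟨P, Q, hQ, hH⟩
  set φ := (1 - PowerSeries.X) * PowerSeries.mk fun d => (1 : ℚ) + (⌊(d : ℝ) * β⌋ : ℤ)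
  have hcoeff : ∀ n, PowerSeries.coeff (n + 1) φ =
      ((⌊((n + 1 : ℕ) : ℝ) * β⌋ - ⌊(n : ℝ) * β⌋ : ℤ) : ℚ) := by
    intro n
    simp [φ, sub_mul, PowerSeries.coeff_succ_X_mul]
  have hrange : (Set.range fun n => PowerSeries.coeff n φ).Finite := by
    refine (Set.toFinite {0, 1}).subset ?_
    rintro _ ⟨_ | n, rfl⟩
    · simp [φ]
    · rcases Int.floor_add_sub_floor_eq_zero_or_one ((n : ℝ) * β) hβ₀ hβ₁ with h | h <;>
        simp [hcoeff, add_one_mul, h]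
  have hrat : (Q : ℚ⟦X⟧) * φ = (((1 - Polynomial.X) * P : ℚ[X]) : ℚ⟦X⟧) := by
    rw [mul_left_comm, hH]
    push_cast
    rfl
  obtain ⟨M, p, hp, hper⟩ := PowerSeries.exists_periodic_coeff_of_polynomial_mul_eq hQ hrat hrange
  refine not_irrational_of_floor_mul_sub_periodic (M := M) hp (fun j => ?_) hβ
  have := hper (j + 1)
  rw [← add_assoc, ← add_assoc, hcoeff, hcoeff] at this
  exact_mod_cast this

/-- For `α > 0` irrational and `β = α/(α+1)`: `c_d = ⌊dβ⌋ - ⌊(d-1)β⌋ ∈ {0,1}` for all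
`d ≥ 1`, and the power series `H(q) = 1/(1-q) + ∑_{d≥1} ⌊dβ⌋ q^d = ∑_{d≥0} (1+⌊dβ⌋) q^d`
over `ℚ` is not a rational function. -/
theorem stmt_19 (α : ℝ) (hα : 0 < α) (hirr : Irrational α) :
    let β : ℝ := α / (α + 1)
    (∀ d : ℕ, 1 ≤ d →
      ⌊(d : ℝ) * β⌋ - ⌊((d : ℝ) - 1) * β⌋ = 0 ∨ ⌊(d : ℝ) * β⌋ - ⌊((d : ℝ) - 1) * β⌋ = 1) ∧
    ¬ ∃ P Q : Polynomial ℚ, Q ≠ 0 ∧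
      (Q : PowerSeries ℚ) * PowerSeries.mk (fun d => (1 : ℚ) + (⌊(d : ℝ) * β⌋ : ℤ))
        = (P : PowerSeries ℚ) := by
  intro β
  have hβ₀ : 0 ≤ β := by positivity
  have hβ₁ : β ≤ 1 := (div_le_one (by positivity)).mpr (by linarith)
  refine ⟨fun d _ => ?_, not_exists_polynomial_mul_mk_one_add_floor_mul_eq hβ₀ hβ₁
    (irrational_div_add_one hirr)⟩
  simpa [sub_mul] using Int.floor_add_sub_floor_eq_zero_or_one (((d : ℝ) - 1) * β) hβ₀ hβ₁
end
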